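/- Let F : ℝ → ℝ be Lipschitz with F(0) = 0 (or just Lipschitz). Then for every measurable f, every x, every α > 0 and ρ > 0, S_α^ρ(F∘f)(x) ≤ Lip(F) · S_α^ρ f(x), where S_α^ρ is the square functional of Definition 5.1. Consequently, whenever c₁‖L^{α/m} h‖_{L^p} ≤ ‖S_α^ρ h‖_{L^p} ≤ c₂‖L^{α/m} h‖_{L^p} holds (characterization of the homogeneous Sobolev norm), one gets ‖L^{α/m} F(f)‖_{L^p} ≲ Lip(F) ‖L^{α/m} f‖_{L^p}. -/

import Mathlib

open MeasureTheory Metric ENNReal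

noncomputable def squareFunctional {X : Type*} [MetricSpace X] [MeasurableSpace X]
    (μ : Measure X) (α ρ : ℝ) (f : X → ℝ) (x : X) : ℝ≥0∞ :=
  (∫⁻ r in Set.Ioi (0 : ℝ),
      (ENNReal.ofReal (r ^ (-α)) *
        ((∫⁻ y in ball x r, ENNReal.ofReal (|f y - f x| ^ ρ) ∂μ) / μ (ball x r)) ^ (1 / ρ)) ^ 2
      / ENNReal.ofReal r) ^ ((1 : ℝ) / 2)

noncomputable def lpNormENN {X : Type*} [MeasurableSpace X]
    (μ : Measure X) (u : X → ℝ≥0∞) (p : ℝ≥0∞) : ℝ≥0∞ :=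
  if p = ∞ then essSup u μ else (∫⁻ x, u x ^ p.toReal ∂μ) ^ (1 / p.toReal)

/-! A Lipschitz bound `|F a - F b| ≤ K |a - b|` survives every operation in the square
functional: raising to the power `ρ`, averaging over balls, taking the `ρ`-th root, weighting in
`r` and integrating are all monotone, and the functional is positively homogeneous, so the constant
`K` comes out in front. The Sobolev estimate follows by sandwiching `S_α^ρ (F ∘ f)` between the two
sides of the norm characterization. -/

theorem ENNReal.mul_rpow_inv_rpow {ρ : ℝ} (hρ : 0 < ρ) (c a : ℝ≥0∞) :
    (c ^ ρ * a) ^ (1 / ρ) = c * a ^ (1 / ρ) := by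
  rw [ENNReal.mul_rpow_of_nonneg _ _ (by positivity), ← ENNReal.rpow_mul,
    mul_one_div_cancel hρ.ne', ENNReal.rpow_one]

theorem ENNReal.le_mul_ofReal_div_mul {a b K : ℝ≥0∞} {c₁ c₂ : ℝ} (hc₁ : 0 < c₁)
    (h : ENNReal.ofReal c₁ * a ≤ K * (ENNReal.ofReal c₂ * b)) :
    a ≤ K * ENNReal.ofReal (c₂ / c₁) * b := by
  have hc₁' : ENNReal.ofReal c₁ ≠ 0 := by simpa using hc₁
  calc a ≤ K * (ENNReal.ofReal c₂ * b) / ENNReal.ofReal c₁ :=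
        (ENNReal.le_div_iff_mul_le (.inl hc₁') (.inl ENNReal.ofReal_ne_top)).2 (by rwa [mul_comm])
    _ = K * ENNReal.ofReal (c₂ / c₁) * b := by
        rw [ENNReal.ofReal_div_of_pos hc₁, div_eq_mul_inv, div_eq_mul_inv]; ring

theorem LipschitzWith.ofReal_abs_sub_rpow_le {K : NNReal} {F : ℝ → ℝ} (hF : LipschitzWith K F)
    {ρ : ℝ} (hρ : 0 ≤ ρ) (a b : ℝ) :
    ENNReal.ofReal (|F a - F b| ^ ρ) ≤ (K : ℝ≥0∞) ^ ρ * ENNReal.ofReal (|a - b| ^ ρ) := by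
  rw [← ENNReal.ofReal_rpow_of_nonneg (abs_nonneg _) hρ,
    ← ENNReal.ofReal_rpow_of_nonneg (abs_nonneg _) hρ, ← ENNReal.mul_rpow_of_nonneg _ _ hρ,
    ← Real.dist_eq, ← Real.dist_eq, ← edist_dist, ← edist_dist]
  exact ENNReal.rpow_le_rpow (hF.edist_le_mul a b) hρ

theorem squareFunctional_comp_le {X : Type*} [MetricSpace X] [MeasurableSpace X]
    (μ : Measure X) (α : ℝ) {ρ : ℝ} (hρ : 0 < ρ) {K : NNReal} {F : ℝ → ℝ}
    (hF : LipschitzWith K F) (f : X → ℝ) (x : X) :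
    squareFunctional μ α ρ (F ∘ f) x ≤ K * squareFunctional μ α ρ f x := by
  have hmean : ∀ r : ℝ,
      ((∫⁻ y in ball x r, ENNReal.ofReal (|(F ∘ f) y - (F ∘ f) x| ^ ρ) ∂μ) / μ (ball x r)) ^ (1 / ρ)
        ≤ K * ((∫⁻ y in ball x r, ENNReal.ofReal (|f y - f x| ^ ρ) ∂μ) / μ (ball x r)) ^ (1 / ρ) := by
    intro r
    rw [← ENNReal.mul_rpow_inv_rpow hρ, ← mul_div_assoc,
      ← lintegral_const_mul' _ _ (by simp [hρ.le])]
    gcongr with y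
    exact hF.ofReal_abs_sub_rpow_le hρ.le _ _
  unfold squareFunctional
  calc _ ≤ (∫⁻ r in Set.Ioi (0 : ℝ), (K : ℝ≥0∞) ^ (2 : ℝ) * ((ENNReal.ofReal (r ^ (-α)) *
            ((∫⁻ y in ball x r, ENNReal.ofReal (|f y - f x| ^ ρ) ∂μ) / μ (ball x r)) ^ (1 / ρ)) ^ 2
            / ENNReal.ofReal r)) ^ ((1 : ℝ) / 2) := by
        gcongr with r
        calc _ ≤ (ENNReal.ofReal (r ^ (-α)) * (K *
            ((∫⁻ y in ball x r, ENNReal.ofReal (|f y - f x| ^ ρ) ∂μ) / μ (ball x r)) ^ (1 / ρ))) ^ 2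
            / ENNReal.ofReal r := by gcongr; exact hmean r
          _ = _ := by rw [ENNReal.rpow_two]; simp only [div_eq_mul_inv]; ring
    _ = _ := by
        rw [lintegral_const_mul' _ _ (by simp), ENNReal.mul_rpow_inv_rpow two_pos]

theorem lpNormENN_mono {X : Type*} [MeasurableSpace X] (μ : Measure X) {u v : X → ℝ≥0∞}
    (h : ∀ x, u x ≤ v x) (p : ℝ≥0∞) : lpNormENN μ u p ≤ lpNormENN μ v p := by
  unfold lpNormENN
  split_ifs
  · exact essSup_mono_ae (Filter.Eventually.of_forall h)
  · gcongr with x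
    exact h x

theorem lpNormENN_const_mul {X : Type*} [MeasurableSpace X] (μ : Measure X) (u : X → ℝ≥0∞)
    {c : ℝ≥0∞} (hc : c ≠ ∞) {p : ℝ≥0∞} (hp : p ≠ 0) :
    lpNormENN μ (fun x => c * u x) p = c * lpNormENN μ u p := by
  unfold lpNormENN
  split_ifs with hp_top
  · exact ENNReal.essSup_const_mul
  · have hq : 0 < p.toReal := ENNReal.toReal_pos hp hp_top
    simp_rw [ENNReal.mul_rpow_of_nonneg _ _ hq.le]
    rw [lintegral_const_mul' _ _ (ENNReal.rpow_ne_top_of_nonneg hq.le hc),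
      ENNReal.mul_rpow_inv_rpow hq]

theorem lipschitz_acts_on_sobolev_general {X : Type*} [MetricSpace X] [MeasurableSpace X]
    (μ : Measure X) (α ρ : ℝ) (hρ : 0 < ρ)
    (F : ℝ → ℝ) (K : NNReal) (hF : LipschitzWith K F) (f : X → ℝ) :
    (∀ x : X, squareFunctional μ α ρ (F ∘ f) x ≤ (K : ℝ≥0∞) * squareFunctional μ α ρ f x) ∧
    (∀ (Lβ : (X → ℝ) → X → ℝ) (p : ℝ≥0∞) (c₁ c₂ : ℝ) (_ : 0 < c₁) (_ : 0 < c₂),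
      (∀ h : X → ℝ,
        ENNReal.ofReal c₁ * eLpNorm (Lβ h) p μ ≤ lpNormENN μ (squareFunctional μ α ρ h) p ∧
        lpNormENN μ (squareFunctional μ α ρ h) p ≤ ENNReal.ofReal c₂ * eLpNorm (Lβ h) p μ) →
      eLpNorm (Lβ (F ∘ f)) p μ ≤
        (K : ℝ≥0∞) * ENNReal.ofReal (c₂ / c₁) * eLpNorm (Lβ f) p μ) := by
  have hpointwise := squareFunctional_comp_le μ α hρ hF f
  refine ⟨hpointwise, fun Lβ p c₁ c₂ hc₁ _ hequiv => ?_⟩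
  rcases eq_or_ne p 0 with rfl | hp
  -- `eLpNorm _ 0 μ = 0`, while `lpNormENN μ _ 0 = 1` is not homogeneous
  · simp
  have hS : lpNormENN μ (squareFunctional μ α ρ (F ∘ f)) p
      ≤ K * lpNormENN μ (squareFunctional μ α ρ f) p :=
    (lpNormENN_mono μ hpointwise p).trans_eq (lpNormENN_const_mul μ _ ENNReal.coe_ne_top hp)
  exact ENNReal.le_mul_ofReal_div_mul hc₁
    ((hequiv (F ∘ f)).1.trans (hS.trans (by gcongr; exact (hequiv f).2)))

/-- A Lipschitz nonlinearity is dominated through the square functional: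
`S_α^ρ(F∘f)(x) ≤ Lip(F) S_α^ρ f(x)` pointwise; consequently, given the
square-function characterization of the homogeneous Sobolev norm,
`‖L^{α/m} F(f)‖_p ≲ Lip(F) ‖L^{α/m} f‖_p`. -/
theorem lipschitz_acts_on_sobolev {X : Type*} [MetricSpace X] [MeasurableSpace X]
    (μ : Measure X) (α ρ : ℝ) (hα : 0 < α) (hρ : 0 < ρ)
    (F : ℝ → ℝ) (K : NNReal) (hF : LipschitzWith K F) (f : X → ℝ) :
    (∀ x : X, squareFunctional μ α ρ (F ∘ f) x ≤ (K : ℝ≥0∞) * squareFunctional μ α ρ f x) ∧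
    (∀ (Lβ : (X → ℝ) → X → ℝ) (p : ℝ≥0∞) (c₁ c₂ : ℝ) (_ : 0 < c₁) (_ : 0 < c₂),
      (∀ h : X → ℝ,
        ENNReal.ofReal c₁ * eLpNorm (Lβ h) p μ ≤ lpNormENN μ (squareFunctional μ α ρ h) p ∧
        lpNormENN μ (squareFunctional μ α ρ h) p ≤ ENNReal.ofReal c₂ * eLpNorm (Lβ h) p μ) →
      eLpNorm (Lβ (F ∘ f)) p μ ≤
        (K : ℝ≥0∞) * ENNReal.ofReal (c₂ / c₁) * eLpNorm (Lβ f) p μ) :=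
  lipschitz_acts_on_sobolev_general μ α ρ hρ F K hF f
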